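/- arXiv:2407.16399 — 2 statements merged into one kernel-verified Lean document; each statement's English description precedes it below -/
import Mathlib

section
/- Fix N ∈ ℕ, N ≥ 1, constants a ∈ ℝ, and σ : ℝ → ℝ Lipschitz with constant L₁ such that σ/σ' extends to a measurable function f with f(x)·σ'(x) = σ(x). Define the scheme x(0) = a and x(k+1) = x(k) + f(x(k))(exp{σ'(x(k)) Z_{k+1}/√N - σ'(x(k))²/(2N)} - 1), where Z₁,...,Z_N are i.i.d. standard Gaussians. Then for all k ≤ N, E[x(k)²] ≤ (1 + M₁ exp{L₁²/N}/N)^k (a² + 1) - 1, where M₁ satisfies σ(x)² ≤ M₁(1+x²) for all x. -/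
open MeasureTheory ProbabilityTheory Real Filter

open scoped ENNReal

/-! Given `x k = u`, the increment is `f u * (W - 1)` with `W = exp (c Z - c² / 2)`,
`c = σ' u / √N`, a Wick exponential of the fresh Gaussian `Z (k + 1)`, which is independent of
`x k` because `x k` is a function of `Z 1, …, Z k`. As `E W = 1` and `E W² = exp c²`,
`E[x (k + 1)² | x k = u] = u² + (f u)² (exp c² - 1)`. From `exp s - 1 ≤ s exp s` and
`f u * c = σ u / √N` this is at most `u² + q (1 + u²)` with `q = M₁ exp (L₁² / N) / N`, so
`E[x (k + 1)²] + 1 ≤ (1 + q) (E[x k ²] + 1)`, and the bound follows by induction. -/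

lemma Real.exp_sub_one_le_mul_exp (s : ℝ) : rexp s - 1 ≤ s * rexp s := by
  have h := mul_le_mul_of_nonneg_right (one_sub_le_exp_neg s) (exp_pos s).le
  rw [← exp_add, neg_add_cancel, exp_zero] at h
  linarith

lemma le_pow_mul_of_le_mul {α : Type*} [CommMonoid α] [Preorder α] [MulLeftMono α]
    {u : ℕ → α} {c : α} (h : ∀ k, u (k + 1) ≤ c * u k) (k : ℕ) : u k ≤ c ^ k * u 0 := by
  induction k with
  | zero => simp
  | succ k ih =>
    calc u (k + 1) ≤ c * u k := h k
      _ ≤ c * (c ^ k * u 0) := mul_le_mul_right ih c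
      _ = c ^ (k + 1) * u 0 := by rw [pow_succ', mul_assoc]

lemma IndepFun.lintegral_comp_eq {Ω β γ : Type*} [MeasurableSpace Ω] [MeasurableSpace β]
    [MeasurableSpace γ] {μ : Measure Ω} [IsFiniteMeasure μ] {X : Ω → β} {Y : Ω → γ}
    (hXY : IndepFun X Y μ) (hX : Measurable X) (hY : Measurable Y) {H : β × γ → ℝ≥0∞}
    (hH : Measurable H) :
    ∫⁻ ω, H (X ω, Y ω) ∂μ = ∫⁻ u, ∫⁻ z, H (u, z) ∂μ.map Y ∂μ.map X := by
  rw [← lintegral_map hH (hX.prodMk hY),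
    hXY.map_prod_eq_prod_map_map hX.aemeasurable hY.aemeasurable, lintegral_prod _ hH.aemeasurable]

lemma integral_le_sub_one_of_lintegral_ofReal_add_one_le {Ω : Type*} [MeasurableSpace Ω]
    {μ : Measure Ω} [IsProbabilityMeasure μ] {F : Ω → ℝ} (hF : ∀ ω, 0 ≤ F ω)
    (hFm : AEStronglyMeasurable F μ) {R : ℝ} (hR : 0 ≤ R)
    (h : ∫⁻ ω, ENNReal.ofReal (F ω + 1) ∂μ ≤ ENNReal.ofReal R) :
    ∫ ω, F ω ∂μ ≤ R - 1 := by
  simp only [ENNReal.ofReal_add (hF _) zero_le_one, ENNReal.ofReal_one] at h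
  rw [lintegral_add_right _ measurable_const, lintegral_const, measure_univ, one_mul] at h
  have hfin : ∫⁻ ω, ENNReal.ofReal (F ω) ∂μ ≠ ⊤ :=
    ne_top_of_le_ne_top ENNReal.ofReal_ne_top (le_self_add.trans h)
  have hle := ENNReal.toReal_mono ENNReal.ofReal_ne_top h
  rw [ENNReal.toReal_add hfin ENNReal.one_ne_top, ENNReal.toReal_one, ENNReal.toReal_ofReal hR]
    at hle
  rw [integral_eq_lintegral_of_nonneg_ae (ae_of_all _ hF) hFm]
  linarith

noncomputable def wickExp (c z : ℝ) : ℝ := rexp (c * z - c ^ 2 / 2)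

lemma Measurable.wickExp {α : Type*} [MeasurableSpace α] {c z : α → ℝ} (hc : Measurable c)
    (hz : Measurable z) : Measurable fun a => wickExp (c a) (z a) := by
  unfold _root_.wickExp
  fun_prop

lemma wickExp_div_sqrt (s z : ℝ) {n : ℝ} (hn : 0 ≤ n) :
    wickExp (s / √n) z = rexp (s * z / √n - s ^ 2 / (2 * n)) := by
  rw [wickExp, div_pow, sq_sqrt hn]
  ring_nf

lemma wickExp_eq_exp_mul (c z : ℝ) : wickExp c z = rexp (-(c ^ 2 / 2)) * rexp (c * z) := by
  rw [wickExp, ← exp_add]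
  ring_nf

lemma wickExp_sq (c z : ℝ) : wickExp c z ^ 2 = rexp (c ^ 2) * wickExp (2 * c) z := by
  rw [wickExp, wickExp, ← exp_nat_mul, ← exp_add]
  ring_nf

lemma integrable_wickExp (c : ℝ) : Integrable (wickExp c) (gaussianReal 0 1) := by
  simp_rw [funext (wickExp_eq_exp_mul c)]
  exact (integrable_exp_mul_gaussianReal c).const_mul _

lemma integral_wickExp (c : ℝ) : ∫ z, wickExp c z ∂gaussianReal 0 1 = 1 := by
  have hmgf := congrFun (mgf_id_gaussianReal (μ := 0) (v := 1)) c
  simp only [mgf, id, zero_mul, NNReal.coe_one, one_mul, zero_add] at hmgf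
  simp_rw [wickExp_eq_exp_mul, integral_const_mul, hmgf, ← exp_add, neg_add_cancel, exp_zero]

lemma sq_add_mul_wickExp_sub_one (u b c z : ℝ) :
    (u + b * (wickExp c z - 1)) ^ 2
      = (u - b) ^ 2
        + (2 * (u - b) * b * wickExp c z + b ^ 2 * rexp (c ^ 2) * wickExp (2 * c) z) := by
  rw [mul_assoc (b ^ 2), ← wickExp_sq]
  ring

lemma integrable_sq_add_mul_wickExp_sub_one (u b c : ℝ) :
    Integrable (fun z => (u + b * (wickExp c z - 1)) ^ 2) (gaussianReal 0 1) := by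
  simp_rw [sq_add_mul_wickExp_sub_one]
  exact (integrable_const _).add
    (((integrable_wickExp c).const_mul _).add ((integrable_wickExp (2 * c)).const_mul _))

lemma integral_sq_add_mul_wickExp_sub_one (u b c : ℝ) :
    ∫ z, (u + b * (wickExp c z - 1)) ^ 2 ∂gaussianReal 0 1
      = u ^ 2 + b ^ 2 * (rexp (c ^ 2) - 1) := by
  have h₁ := (integrable_wickExp c).const_mul (2 * (u - b) * b)
  have h₂ := (integrable_wickExp (2 * c)).const_mul (b ^ 2 * rexp (c ^ 2))
  simp_rw [sq_add_mul_wickExp_sub_one]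
  rw [integral_add (integrable_const _) (h₁.fun_add h₂), integral_add h₁ h₂, integral_const_mul,
    integral_const_mul, integral_wickExp, integral_wickExp, integral_const]
  simp only [probReal_univ, smul_eq_mul]
  ring

section RandomRecursion

variable {Ω β γ : Type*} [MeasurableSpace β] [mγ : MeasurableSpace γ] {Z : ℕ → Ω → γ}
  {x : ℕ → Ω → β} {g : β × γ → β} {a : β}

lemma measurable_iSup_comap_of_recursion (hg : Measurable g) (hx0 : ∀ ω, x 0 ω = a)
    (hrec : ∀ k ω, x (k + 1) ω = g (x k ω, Z (k + 1) ω)) (k : ℕ) :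
    Measurable[⨆ i ∈ Set.Iic k, mγ.comap (Z i)] (x k) := by
  induction k with
  | zero => exact (funext hx0 ▸ measurable_const :)
  | succ k ih =>
    have hmono : (⨆ i ∈ Set.Iic k, mγ.comap (Z i))
        ≤ ⨆ i ∈ Set.Iic (k + 1), mγ.comap (Z i) :=
      biSup_mono fun i hi => Set.mem_Iic.2 (Nat.le_succ_of_le hi)
    have hZ : Measurable[⨆ i ∈ Set.Iic (k + 1), mγ.comap (Z i)] (Z (k + 1)) :=
      Measurable.of_comap_le (le_iSup₂_of_le (k + 1) (Set.mem_Iic.2 le_rfl) le_rfl)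
    rw [funext (hrec k)]
    exact hg.comp ((ih.mono hmono le_rfl).prodMk hZ)

lemma indepFun_of_recursion [MeasurableSpace Ω] {μ : Measure Ω} (hZ : ∀ i, Measurable (Z i))
    (hind : iIndepFun Z μ) (hg : Measurable g) (hx0 : ∀ ω, x 0 ω = a)
    (hrec : ∀ k ω, x (k + 1) ω = g (x k ω, Z (k + 1) ω)) (k : ℕ) :
    IndepFun (x k) (Z (k + 1)) μ := by
  have hdisj : Disjoint (Set.Iic k) {k + 1} := by simp
  have h := indep_iSup_of_disjoint (fun i => (hZ i).comap_le)
    ((iIndepFun_iff_iIndep _ _ _).1 hind) hdisj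
  refine indep_of_indep_of_le_right (indep_of_indep_of_le_left h ?_) ?_
  · exact (measurable_iSup_comap_of_recursion hg hx0 hrec k).comap_le
  · exact le_iSup₂_of_le (k + 1) rfl le_rfl

lemma measurable_of_recursion [MeasurableSpace Ω] (hZ : ∀ i, Measurable (Z i))
    (hg : Measurable g) (hx0 : ∀ ω, x 0 ω = a)
    (hrec : ∀ k ω, x (k + 1) ω = g (x k ω, Z (k + 1) ω)) (k : ℕ) :
    Measurable (x k) :=
  (measurable_iSup_comap_of_recursion hg hx0 hrec k).mono
    (iSup₂_le fun i _ => (hZ i).comap_le) le_rfl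

end RandomRecursion

theorem integral_sq_le_of_recursion {Ω γ : Type*} [MeasurableSpace Ω] [MeasurableSpace γ]
    {μ : Measure Ω} [IsProbabilityMeasure μ] {Z : ℕ → Ω → γ}
    (hZ : ∀ i, Measurable (Z i)) (hind : iIndepFun Z μ) {ν : Measure γ} [IsProbabilityMeasure ν]
    (hlaw : ∀ i, μ.map (Z i) = ν) {g : ℝ × γ → ℝ} (hg : Measurable g) {r : ℝ}
    (hint : ∀ u, Integrable (fun z => g (u, z) ^ 2) ν)
    (hstep : ∀ u, ∫ z, g (u, z) ^ 2 ∂ν + 1 ≤ r * (u ^ 2 + 1))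
    {x : ℕ → Ω → ℝ} {a : ℝ} (hx0 : ∀ ω, x 0 ω = a)
    (hrec : ∀ k ω, x (k + 1) ω = g (x k ω, Z (k + 1) ω)) (k : ℕ) :
    ∫ ω, x k ω ^ 2 ∂μ ≤ r ^ k * (a ^ 2 + 1) - 1 := by
  have hxm := measurable_of_recursion hZ hg hx0 hrec
  have hr : 0 ≤ r := by
    have : 0 ≤ ∫ z, g (0, z) ^ 2 ∂ν := integral_nonneg fun z => sq_nonneg _
    nlinarith [hstep 0]
  have hinner : ∀ u, ∫⁻ z, ENNReal.ofReal (g (u, z) ^ 2 + 1) ∂ν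
      ≤ ENNReal.ofReal r * ENNReal.ofReal (u ^ 2 + 1) := by
    intro u
    rw [← ofReal_integral_eq_lintegral_ofReal ((hint u).fun_add (integrable_const 1))
      (ae_of_all _ fun z => add_nonneg (sq_nonneg _) zero_le_one),
      integral_add (hint u) (integrable_const 1), integral_const, probReal_univ, one_smul,
      ← ENNReal.ofReal_mul hr]
    exact ENNReal.ofReal_le_ofReal (hstep u)
  -- Lower integrals, so that square-integrability of `x k` need not be established first.
  set V : ℕ → ℝ≥0∞ := fun k => ∫⁻ ω, ENNReal.ofReal (x k ω ^ 2 + 1) ∂μ with hV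
  have hVstep : ∀ k, V (k + 1) ≤ ENNReal.ofReal r * V k := by
    intro k
    calc V (k + 1) = ∫⁻ u, ∫⁻ z, ENNReal.ofReal (g (u, z) ^ 2 + 1) ∂ν ∂μ.map (x k) := by
          simp only [hV, hrec]
          rw [← hlaw (k + 1)]
          exact IndepFun.lintegral_comp_eq (H := fun p => ENNReal.ofReal (g p ^ 2 + 1))
            (indepFun_of_recursion hZ hind hg hx0 hrec k) (hxm k) (hZ _) (by fun_prop)
      _ ≤ ∫⁻ u, ENNReal.ofReal r * ENNReal.ofReal (u ^ 2 + 1) ∂μ.map (x k) :=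
          lintegral_mono hinner
      _ = ENNReal.ofReal r * V k := by
          rw [lintegral_const_mul _ (by fun_prop), lintegral_map (by fun_prop) (hxm k)]
  have hV0 : V 0 = ENNReal.ofReal (a ^ 2 + 1) := by simp [hV, hx0]
  refine integral_le_sub_one_of_lintegral_ofReal_add_one_le (fun ω => sq_nonneg _)
    (by fun_prop) (by positivity) ?_
  rw [ENNReal.ofReal_mul (by positivity), ENNReal.ofReal_pow hr, ← hV0]
  exact le_pow_mul_of_le_mul hVstep k

lemma sq_mul_exp_sq_div_sqrt_sub_one_le {b d L n : ℝ} (hn : 0 ≤ n) (hd : |d| ≤ L) :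
    b ^ 2 * (rexp ((d / √n) ^ 2) - 1) ≤ (b * d) ^ 2 * rexp (L ^ 2 / n) / n := by
  have hc : (d / √n) ^ 2 = d ^ 2 / n := by rw [div_pow, sq_sqrt hn]
  have hdL : d ^ 2 ≤ L ^ 2 := sq_le_sq' (neg_le_of_abs_le hd) (le_of_abs_le hd)
  calc b ^ 2 * (rexp ((d / √n) ^ 2) - 1)
      ≤ b ^ 2 * ((d / √n) ^ 2 * rexp ((d / √n) ^ 2)) := by
        gcongr; exact exp_sub_one_le_mul_exp _
    _ = (b * d) ^ 2 * rexp (d ^ 2 / n) / n := by rw [hc]; ring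
    _ ≤ (b * d) ^ 2 * rexp (L ^ 2 / n) / n := by gcongr

theorem wick_scheme_second_moment_bound_general {Ω : Type*} [MeasurableSpace Ω]
    (μ : Measure Ω) [IsProbabilityMeasure μ]
    (N : ℕ) (a L₁ M₁ : ℝ)
    (σ σ' f : ℝ → ℝ)
    (hderiv : ∀ x, HasDerivAt σ (σ' x) x)
    (hL₁ : ∀ x, |σ' x| ≤ L₁)
    (hf : Measurable f) (hfσ : ∀ x, f x * σ' x = σ x)
    (hM₁ : ∀ x, σ x ^ 2 ≤ M₁ * (1 + x ^ 2))
    (Z : ℕ → Ω → ℝ) (hZmeas : ∀ i, Measurable (Z i))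
    (hiid : iIndepFun Z μ)
    (hZg : ∀ i, Measure.map (Z i) μ = gaussianReal 0 1)
    (x : ℕ → Ω → ℝ) (hx0 : ∀ ω, x 0 ω = a)
    (hxrec : ∀ k ω, x (k + 1) ω = x k ω + f (x k ω) *
      (Real.exp (σ' (x k ω) * Z (k + 1) ω / Real.sqrt N - σ' (x k ω) ^ 2 / (2 * N)) - 1)) :
    ∀ k ≤ N, ∫ ω, (x k ω) ^ 2 ∂μ ≤
      (1 + M₁ * Real.exp (L₁ ^ 2 / N) / N) ^ k * (a ^ 2 + 1) - 1 := by
  intro k _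
  have hσ' : Measurable σ' := by
    rw [← funext fun y => (hderiv y).deriv]
    exact measurable_deriv σ
  have hN : (0 : ℝ) ≤ N := N.cast_nonneg
  have hg : Measurable fun p : ℝ × ℝ => p.1 + f p.1 * (wickExp (σ' p.1 / √N) p.2 - 1) :=
    measurable_fst.add ((hf.comp measurable_fst).mul
      ((((hσ'.comp measurable_fst).div_const _).wickExp measurable_snd).sub_const 1))
  have hrec : ∀ k ω,
      x (k + 1) ω = x k ω + f (x k ω) * (wickExp (σ' (x k ω) / √N) (Z (k + 1) ω) - 1) := by
    intro k ω
    rw [hxrec, wickExp_div_sqrt _ _ hN]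
  refine integral_sq_le_of_recursion hZmeas hiid hZg hg
    (r := 1 + M₁ * rexp (L₁ ^ 2 / N) / N)
    (fun u => integrable_sq_add_mul_wickExp_sub_one u (f u) (σ' u / √N)) (fun u => ?_) hx0 hrec k
  have hexp := sq_mul_exp_sq_div_sqrt_sub_one_le (b := f u) hN (hL₁ u)
  have hσ : σ u ^ 2 * rexp (L₁ ^ 2 / N) / N ≤ M₁ * (1 + u ^ 2) * rexp (L₁ ^ 2 / N) / N := by
    gcongr; exact hM₁ u
  rw [hfσ] at hexp
  dsimp only
  rw [integral_sq_add_mul_wickExp_sub_one]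
  linear_combination hexp + hσ

theorem wick_scheme_second_moment_bound {Ω : Type*} [MeasurableSpace Ω]
    (μ : Measure Ω) [IsProbabilityMeasure μ]
    (N : ℕ) (hN : 1 ≤ N) (a L₁ M₁ : ℝ)
    (σ σ' f : ℝ → ℝ)
    (hderiv : ∀ x, HasDerivAt σ (σ' x) x)
    (hL₁ : ∀ x, |σ' x| ≤ L₁)
    (hf : Measurable f) (hfσ : ∀ x, f x * σ' x = σ x)
    (hM₁pos : 0 < M₁) (hM₁ : ∀ x, σ x ^ 2 ≤ M₁ * (1 + x ^ 2))
    (Z : ℕ → Ω → ℝ) (hZmeas : ∀ i, Measurable (Z i))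
    (hiid : iIndepFun Z μ)
    (hZg : ∀ i, Measure.map (Z i) μ = gaussianReal 0 1)
    (x : ℕ → Ω → ℝ) (hx0 : ∀ ω, x 0 ω = a)
    (hxrec : ∀ k ω, x (k + 1) ω = x k ω + f (x k ω) *
      (Real.exp (σ' (x k ω) * Z (k + 1) ω / Real.sqrt N - σ' (x k ω) ^ 2 / (2 * N)) - 1)) :
    ∀ k ≤ N, ∫ ω, (x k ω) ^ 2 ∂μ ≤
      (1 + M₁ * Real.exp (L₁ ^ 2 / N) / N) ^ k * (a ^ 2 + 1) - 1 :=
  wick_scheme_second_moment_bound_general μ N a L₁ M₁ σ σ' f hderiv hL₁ hf hfσ hM₁ Z hZmeas hiid hZg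
    x hx0 hxrec
end

section
/- Let Z be standard Gaussian, c ∈ ℝ with |c| ≤ L, and t > 0. Then E[(exp{c√t Z - c²t/2} - 1 - c√t Z - (c²t/2)(Z²-1))²] ≤ c²t (exp{L²t} - 1 - L²t). -/
/-!
With `a = c √t`, let `W z = exp (a z - a² / 2)` and `P z = 1 + a z + a² / 2 (z² - 1)`. Expanding
`(W - P)²` leaves quartic polynomials times `exp (s z)` for `s = 2a, a, 0`, and
`∫ zᵏ exp (s z) dγ` is the `k`-th derivative in `s` of the moment generating function
`exp (s² / 2)`. This gives `E[(W - P)²] = exp (a²) - 1 - a² - a⁴ / 2`. The bound follows from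
`exp x - 1 - x - x² / 2 ≤ x (exp y - 1 - y)` for `0 ≤ x ≤ y`, whose two sides agree at `x = 0`
and whose `x`-derivatives compare by monotonicity of `exp s - 1 - s` on `[0, ∞)`.
-/

open MeasureTheory ProbabilityTheory Real

namespace ProbabilityTheory

lemma integrable_pow_mul_exp_gaussianReal (n : ℕ) (t : ℝ) :
    Integrable (fun z ↦ z ^ n * exp (t * z)) (gaussianReal 0 1) :=
  integrable_pow_mul_exp_of_mem_interior_integrableExpSet (X := id) (by simp) n

lemma hasDerivAt_integral_pow_mul_exp_gaussianReal (n : ℕ) (t : ℝ) :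
    HasDerivAt (fun t ↦ ∫ z, z ^ n * exp (t * z) ∂gaussianReal 0 1)
      (∫ z, z ^ (n + 1) * exp (t * z) ∂gaussianReal 0 1) t :=
  hasDerivAt_integral_pow_mul_exp_real (X := id) (by simp) n

lemma integral_pow_succ_mul_exp_gaussianReal {n : ℕ} {p p' : ℝ → ℝ}
    (hn : ∀ t, ∫ z, z ^ n * exp (t * z) ∂gaussianReal 0 1 = p t * exp (t ^ 2 / 2))
    (hp : ∀ t, HasDerivAt p (p' t) t) (t : ℝ) :
    ∫ z, z ^ (n + 1) * exp (t * z) ∂gaussianReal 0 1 = (p' t + t * p t) * exp (t ^ 2 / 2) := by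
  have hexp : HasDerivAt (fun t ↦ exp (t ^ 2 / 2)) (t * exp (t ^ 2 / 2)) t := by
    simpa [mul_comm] using ((hasDerivAt_pow 2 t).div_const 2).exp
  have := hasDerivAt_integral_pow_mul_exp_gaussianReal n t
  rw [funext hn] at this
  exact this.unique (((hp t).mul hexp).congr_deriv (by ring))

lemma integral_exp_mul_gaussianReal (t : ℝ) :
    ∫ z, exp (t * z) ∂gaussianReal 0 1 = exp (t ^ 2 / 2) := by
  simpa [mgf] using congrFun (mgf_fun_id_gaussianReal (μ := 0) (v := 1)) t

lemma integral_mul_exp_gaussianReal (t : ℝ) :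
    ∫ z, z * exp (t * z) ∂gaussianReal 0 1 = t * exp (t ^ 2 / 2) := by
  simpa using integral_pow_succ_mul_exp_gaussianReal (n := 0) (p := fun _ ↦ 1)
    (by simpa using integral_exp_mul_gaussianReal) (fun _ ↦ hasDerivAt_const _ _) t

lemma integral_sq_mul_exp_gaussianReal (t : ℝ) :
    ∫ z, z ^ 2 * exp (t * z) ∂gaussianReal 0 1 = (1 + t ^ 2) * exp (t ^ 2 / 2) := by
  rw [integral_pow_succ_mul_exp_gaussianReal (by simpa using integral_mul_exp_gaussianReal)
    hasDerivAt_id']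
  ring

lemma integral_pow_three_mul_exp_gaussianReal (t : ℝ) :
    ∫ z, z ^ 3 * exp (t * z) ∂gaussianReal 0 1 = (3 * t + t ^ 3) * exp (t ^ 2 / 2) := by
  rw [integral_pow_succ_mul_exp_gaussianReal integral_sq_mul_exp_gaussianReal
    (fun t ↦ (hasDerivAt_pow 2 t).const_add 1)]
  ring

lemma integral_pow_four_mul_exp_gaussianReal (t : ℝ) :
    ∫ z, z ^ 4 * exp (t * z) ∂gaussianReal 0 1 =
      (3 + 6 * t ^ 2 + t ^ 4) * exp (t ^ 2 / 2) := by
  rw [integral_pow_succ_mul_exp_gaussianReal integral_pow_three_mul_exp_gaussianReal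
    (fun t ↦ ((hasDerivAt_id t).const_mul 3).add (hasDerivAt_pow 3 t))]
  ring

lemma quartic_mul_exp_eq_sum (c₀ c₁ c₂ c₃ c₄ t : ℝ) :
    (fun z : ℝ ↦ (c₀ + c₁ * z + c₂ * z ^ 2 + c₃ * z ^ 3 + c₄ * z ^ 4) * exp (t * z)) =
      fun z ↦ ∑ k : Fin 5, ![c₀, c₁, c₂, c₃, c₄] k * (z ^ (k : ℕ) * exp (t * z)) := by
  ext z
  simp only [Fin.sum_univ_succ, Fin.sum_univ_zero, Matrix.cons_val_succ, Matrix.cons_val_zero,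
    Fin.val_succ, Fin.val_zero]
  ring

lemma integrable_quartic_mul_exp_gaussianReal (c₀ c₁ c₂ c₃ c₄ t : ℝ) :
    Integrable (fun z ↦ (c₀ + c₁ * z + c₂ * z ^ 2 + c₃ * z ^ 3 + c₄ * z ^ 4) * exp (t * z))
      (gaussianReal 0 1) := by
  rw [quartic_mul_exp_eq_sum]
  exact integrable_finsetSum _ fun k _ ↦ (integrable_pow_mul_exp_gaussianReal k t).const_mul _

lemma integral_quartic_mul_exp_gaussianReal (c₀ c₁ c₂ c₃ c₄ t : ℝ) :
    ∫ z, (c₀ + c₁ * z + c₂ * z ^ 2 + c₃ * z ^ 3 + c₄ * z ^ 4) * exp (t * z) ∂gaussianReal 0 1 =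
      (c₀ + c₁ * t + c₂ * (1 + t ^ 2) + c₃ * (3 * t + t ^ 3) + c₄ * (3 + 6 * t ^ 2 + t ^ 4)) *
        exp (t ^ 2 / 2) := by
  rw [quartic_mul_exp_eq_sum, integral_finsetSum _
    fun (k : Fin 5) _ ↦ (integrable_pow_mul_exp_gaussianReal k t).const_mul _]
  simp only [integral_const_mul, Fin.sum_univ_succ, Fin.sum_univ_zero, Matrix.cons_val_succ,
    Matrix.cons_val_zero, Fin.val_succ, Fin.val_zero, Nat.reduceAdd, pow_zero, pow_one, one_mul,
    integral_exp_mul_gaussianReal, integral_mul_exp_gaussianReal, integral_sq_mul_exp_gaussianReal,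
    integral_pow_three_mul_exp_gaussianReal, integral_pow_four_mul_exp_gaussianReal]
  ring

lemma integral_sq_exp_sub_hermite_gaussianReal (a : ℝ) :
    ∫ z, (exp (a * z - a ^ 2 / 2) - 1 - a * z - a ^ 2 / 2 * (z ^ 2 - 1)) ^ 2 ∂gaussianReal 0 1 =
      exp (a ^ 2) - 1 - a ^ 2 - a ^ 4 / 2 := by
  set e := exp (-(a ^ 2 / 2))
  -- `exp (a z - a² / 2) = e · exp (a z)`
  have hsplit : (fun z ↦ (exp (a * z - a ^ 2 / 2) - 1 - a * z - a ^ 2 / 2 * (z ^ 2 - 1)) ^ 2) =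
      fun z ↦ (e ^ 2 + 0 * z + 0 * z ^ 2 + 0 * z ^ 3 + 0 * z ^ 4) * exp ((2 * a) * z) +
        (-2 * e * (1 - a ^ 2 / 2) + -2 * e * a * z + -2 * e * (a ^ 2 / 2) * z ^ 2 + 0 * z ^ 3 +
          0 * z ^ 4) * exp (a * z) +
        ((1 - a ^ 2 / 2) ^ 2 + 2 * a * (1 - a ^ 2 / 2) * z + (a ^ 2 + (1 - a ^ 2 / 2) * a ^ 2) * z ^ 2 +
          a ^ 3 * z ^ 3 + a ^ 4 / 4 * z ^ 4) * exp (0 * z) := by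
    ext z
    rw [sub_eq_add_neg (a * z), exp_add, mul_assoc 2, two_mul (a * z), exp_add, zero_mul, exp_zero]
    ring
  have hint := integrable_quartic_mul_exp_gaussianReal
  rw [hsplit, integral_add (by exact (hint ..).add (hint ..)) (hint ..),
    integral_add (hint ..) (hint ..)]
  simp only [integral_quartic_mul_exp_gaussianReal]
  have he : e ^ 2 * exp ((2 * a) ^ 2 / 2) = exp (a ^ 2) := by
    rw [← exp_nat_mul, ← exp_add]; ring_nf
  have he' : e * exp (a ^ 2 / 2) = 1 := by
    rw [← exp_add]; simp
  have h0 : exp ((0 : ℝ) ^ 2 / 2) = 1 := by simp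
  linear_combination he - 2 * (1 + a ^ 2 + a ^ 4 / 2) * he' + (1 + a ^ 2 + a ^ 4 / 2) * h0

end ProbabilityTheory

namespace Real

lemma exp_sub_one_sub_le_exp_sub_one_sub {s u : ℝ} (hs : 0 ≤ s) (hsu : s ≤ u) :
    exp s - 1 - s ≤ exp u - 1 - u := by
  have hexp : exp u = exp s * exp (u - s) := by rw [← exp_add]; ring_nf
  nlinarith [add_one_le_exp (u - s), one_le_exp hs]

lemma exp_sub_one_sub_sub_sq_div_two_le {x y : ℝ} (hx : 0 ≤ x) (hxy : x ≤ y) :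
    exp x - 1 - x - x ^ 2 / 2 ≤ x * (exp y - 1 - y) := by
  set K := exp y - 1 - y
  let ψ s := s * K - (exp s - 1 - s - s ^ 2 / 2)
  have hψ s : HasDerivAt ψ (K - (exp s - 1 - s)) s := by
    have := ((hasDerivAt_id' s).mul_const K).sub
      ((((hasDerivAt_exp s).sub_const 1).sub (hasDerivAt_id' s)).sub
        ((hasDerivAt_pow 2 s).div_const 2))
    exact this.congr_deriv (by ring)
  have hmono : MonotoneOn ψ (Set.Icc 0 y) := by
    refine monotoneOn_of_deriv_nonneg (convex_Icc 0 y) (by fun_prop)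
      (fun s _ ↦ (hψ s).differentiableAt.differentiableWithinAt) fun s hs ↦ ?_
    rw [interior_Icc] at hs
    rw [(hψ s).deriv, sub_nonneg]
    exact exp_sub_one_sub_le_exp_sub_one_sub hs.1.le hs.2.le
  have := hmono ⟨le_rfl, hx.trans hxy⟩ ⟨hx, hxy⟩ hx
  simp only [ψ, exp_zero] at this
  linarith

end Real

theorem wick_exponential_remainder_L2_bound (c t L : ℝ) (hc : |c| ≤ L) (ht : 0 < t) :
    ∫ z, (Real.exp (c * Real.sqrt t * z - c ^ 2 * t / 2) - 1 - c * Real.sqrt t * z -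
        c ^ 2 * t / 2 * (z ^ 2 - 1)) ^ 2 ∂(gaussianReal 0 1)
      ≤ c ^ 2 * t * (Real.exp (L ^ 2 * t) - 1 - L ^ 2 * t) := by
  have hsq : (c * √t) ^ 2 = c ^ 2 * t := by rw [mul_pow, sq_sqrt ht.le]
  have hcL : c ^ 2 ≤ L ^ 2 := by
    simpa only [sq_abs] using pow_le_pow_left₀ (abs_nonneg c) hc 2
  have key := integral_sq_exp_sub_hermite_gaussianReal (c * √t)
  rw [hsq, show (c * √t) ^ 4 = (c ^ 2 * t) ^ 2 by rw [← hsq]; ring] at key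
  rw [key]
  linarith [exp_sub_one_sub_sub_sq_div_two_le (by positivity : 0 ≤ c ^ 2 * t)
    (mul_le_mul_of_nonneg_right hcL ht.le)]
end
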